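/- arXiv:1910.12629 — 6 statements merged into one kernel-verified Lean document; each statement's English description precedes it below -/
import Mathlib

section
/- On the edge x = 0, y + z = 1, the equation P_P = P_D has the unique solution z = α where α = (rc/N - c - G + pq(N-1)b) / ((B + b - h)(N-1)pq - B(N-1)), provided the denominator is nonzero. Hence (0, 1-α, α) is an equilibrium of the replicator dynamics whenever 0 < α < 1. -/
/-!
On the edge `x = 0, y = 1 - z` the payoff difference `P_P - P_D` is affine in `z`, namely
`K - D z` with `K` and `D` the numerator and denominator of `α`, so for `D ≠ 0` it vanishes
exactly at `z = α`. At a point of the edge where `P_P = P_D`, both strategies present earn the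
mean payoff and the absent one has zero share, so every replicator rate vanishes.
-/

/-- Payoff of a cooperator. -/
noncomputable def PCf (N r c x z : ℝ) : ℝ := r*c/N*(N-1)*(x+z) + r*c/N - c

/-- Payoff of a defector. -/
noncomputable def PDf (N r c B h p q x z : ℝ) : ℝ :=
  r*c/N*(N-1)*(x+z) - (1-p*q)*B*(N-1)*z - p*q*(N-1)*z*h

/-- Payoff of a pool punisher. -/
noncomputable def PPf (N r c G b p q x y z : ℝ) : ℝ :=
  r*c/N*(N-1)*(x+z) + r*c/N - c - G + p*q*(N-1)*y*b

theorem PPf_sub_PDf_on_DP_edge (N r c G B b h p q z : ℝ) :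
    PPf N r c G b p q 0 (1-z) z - PDf N r c B h p q 0 z =
      (r*c/N - c - G + p*q*(N-1)*b) - ((B + b - h)*(N-1)*p*q - B*(N-1)) * z := by
  unfold PPf PDf
  ring

theorem PPf_eq_PDf_on_DP_edge_iff (N r c G B b h p q z : ℝ)
    (hden : (B + b - h)*(N-1)*p*q - B*(N-1) ≠ 0) :
    PPf N r c G b p q 0 (1-z) z = PDf N r c B h p q 0 z ↔
      z = (r*c/N - c - G + p*q*(N-1)*b) / ((B + b - h)*(N-1)*p*q - B*(N-1)) := by
  rw [← sub_eq_zero, PPf_sub_PDf_on_DP_edge, sub_eq_zero, eq_div_iff hden, mul_comm z, eq_comm]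

theorem replicator_rates_eq_zero_on_edge_of_payoff_eq {a d e : ℝ} (z : ℝ) (hed : e = d) :
    0 * (a - (0 * a + (1-z) * d + z * e)) = 0 ∧
      (1-z) * (d - (0 * a + (1-z) * d + z * e)) = 0 ∧
      z * (e - (0 * a + (1-z) * d + z * e)) = 0 := by
  subst hed
  refine ⟨?_, ?_, ?_⟩ <;> ring

theorem stmt2_general (N r c G B b h p q α : ℝ)
    (hden : (B + b - h)*(N-1)*p*q - B*(N-1) ≠ 0)
    (hα : α = (r*c/N - c - G + p*q*(N-1)*b) / ((B + b - h)*(N-1)*p*q - B*(N-1))) :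
    (∀ z : ℝ, PPf N r c G b p q 0 (1-z) z = PDf N r c B h p q 0 z ↔ z = α) ∧
    (0 < α → α < 1 →
      0 * (PCf N r c 0 α
          - (0 * PCf N r c 0 α + (1-α) * PDf N r c B h p q 0 α
              + α * PPf N r c G b p q 0 (1-α) α)) = 0 ∧
      (1-α) * (PDf N r c B h p q 0 α
          - (0 * PCf N r c 0 α + (1-α) * PDf N r c B h p q 0 α
              + α * PPf N r c G b p q 0 (1-α) α)) = 0 ∧
      α * (PPf N r c G b p q 0 (1-α) α
          - (0 * PCf N r c 0 α + (1-α) * PDf N r c B h p q 0 α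
              + α * PPf N r c G b p q 0 (1-α) α)) = 0) := by
  have hunique (z : ℝ) : PPf N r c G b p q 0 (1-z) z = PDf N r c B h p q 0 z ↔ z = α := by
    rw [hα]
    exact PPf_eq_PDf_on_DP_edge_iff N r c G B b h p q z hden
  exact ⟨hunique, fun _ _ => replicator_rates_eq_zero_on_edge_of_payoff_eq α ((hunique α).mpr rfl)⟩

/-- on the edge x = 0, y + z = 1, the equation P_P = P_D has the unique
solution z = α (given a nonzero denominator); hence (0, 1-α, α) is an equilibrium of the
replicator dynamics whenever 0 < α < 1. -/
theorem stmt2 (N r c G B b h p q α : ℝ)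
    (hr : 1 < r) (hrN : r < N) (hc : 0 < c) (hG : 0 < G) (hB : 0 < B) (hb : 0 < b)
    (hh : 0 ≤ h) (hp0 : 0 < p) (hp1 : p ≤ 1) (hq0 : 0 < q) (hq1 : q ≤ 1)
    (hden : (B + b - h)*(N-1)*p*q - B*(N-1) ≠ 0)
    (hα : α = (r*c/N - c - G + p*q*(N-1)*b) / ((B + b - h)*(N-1)*p*q - B*(N-1))) :
    (∀ z : ℝ, PPf N r c G b p q 0 (1-z) z = PDf N r c B h p q 0 z ↔ z = α) ∧
    (0 < α → α < 1 →
      0 * (PCf N r c 0 α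
          - (0 * PCf N r c 0 α + (1-α) * PDf N r c B h p q 0 α
              + α * PPf N r c G b p q 0 (1-α) α)) = 0 ∧
      (1-α) * (PDf N r c B h p q 0 α
          - (0 * PCf N r c 0 α + (1-α) * PDf N r c B h p q 0 α
              + α * PPf N r c G b p q 0 (1-α) α)) = 0 ∧
      α * (PPf N r c G b p q 0 (1-α) α
          - (0 * PCf N r c 0 α + (1-α) * PDf N r c B h p q 0 α
              + α * PPf N r c G b p q 0 (1-α) α)) = 0) :=
  stmt2_general N r c G B b h p q α hden hα
end

section
/- Define β = (c - rc/N)/((1-pq)B(N-1) + pq·h(N-1)) and μ = G/(pq(N-1)b), assuming the denominators are positive. If β < 1, μ < 1, and β + μ < 1, then the point (x, y, z) = (1-β-μ, μ, β) satisfies P_C = P_D = P_P, and hence is an interior equilibrium of the replicator dynamics. -/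
section PayoffDifferences

variable {N r c G B b h p q x y z : ℝ}

theorem PCf_eq_PDf_iff :
    PCf N r c x z = PDf N r c B h p q x z ↔
      z * ((1-p*q)*B*(N-1) + p*q*h*(N-1)) = c - r*c/N := by
  unfold PCf PDf
  constructor <;> intro H <;> linarith

theorem PPf_eq_PCf_iff :
    PPf N r c G b p q x y z = PCf N r c x z ↔ y * (p*q*(N-1)*b) = G := by
  unfold PPf PCf
  constructor <;> intro H <;> linarith

end PayoffDifferences

theorem stmt3_general (N r c G B b h p q β μ : ℝ)
    (hden1 : 0 < (1-p*q)*B*(N-1) + p*q*h*(N-1))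
    (hden2 : 0 < p*q*(N-1)*b)
    (hβ : β = (c - r*c/N) / ((1-p*q)*B*(N-1) + p*q*h*(N-1)))
    (hμ : μ = G / (p*q*(N-1)*b)) :
    PCf N r c (1-β-μ) β = PDf N r c B h p q (1-β-μ) β ∧
    PDf N r c B h p q (1-β-μ) β = PPf N r c G b p q (1-β-μ) μ β := by
  have hCD : PCf N r c (1-β-μ) β = PDf N r c B h p q (1-β-μ) β :=
    PCf_eq_PDf_iff.mpr (by rw [hβ, div_mul_cancel₀ _ hden1.ne'])
  have hPC : PPf N r c G b p q (1-β-μ) μ β = PCf N r c (1-β-μ) β :=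
    PPf_eq_PCf_iff.mpr (by rw [hμ, div_mul_cancel₀ _ hden2.ne'])
  exact ⟨hCD, hCD.symm.trans hPC.symm⟩

/-- with β = (c - rc/N)/((1-pq)B(N-1) + pq h(N-1)) and μ = G/(pq(N-1)b)
(positive denominators), if β < 1, μ < 1 and β + μ < 1, then (x,y,z) = (1-β-μ, μ, β)
satisfies P_C = P_D = P_P, hence is an interior equilibrium of the replicator dynamics. -/
theorem stmt3 (N r c G B b h p q β μ : ℝ)
    (hr : 1 < r) (hrN : r < N) (hc : 0 < c) (hG : 0 < G) (hB : 0 < B) (hb : 0 < b)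
    (hh : 0 ≤ h) (hp0 : 0 < p) (hp1 : p ≤ 1) (hq0 : 0 < q) (hq1 : q ≤ 1)
    (hden1 : 0 < (1-p*q)*B*(N-1) + p*q*h*(N-1))
    (hden2 : 0 < p*q*(N-1)*b)
    (hβ : β = (c - r*c/N) / ((1-p*q)*B*(N-1) + p*q*h*(N-1)))
    (hμ : μ = G / (p*q*(N-1)*b))
    (hβ1 : β < 1) (hμ1 : μ < 1) (hβμ : β + μ < 1) :
    PCf N r c (1-β-μ) β = PDf N r c B h p q (1-β-μ) β ∧
    PDf N r c B h p q (1-β-μ) β = PPf N r c G b p q (1-β-μ) μ β :=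
  stmt3_general N r c G B b h p q β μ hden1 hden2 hβ hμ
end

section
/- The Jacobian of the reduced planar replicator system at the vertex (x,y) = (1,0) (all-cooperator state) is upper triangular with eigenvalues -G and c - rc/N. Since r < N implies c - rc/N > 0, the all-cooperator state is a saddle point and therefore unstable. -/
/-- Right-hand side of ẋ in the reduced planar replicator system (z = 1-x-y). -/
noncomputable def fRHS (N r c G B b h p q : ℝ) (x y : ℝ) : ℝ :=
  let z := 1 - x - y
  let PC := r*c/N*(N-1)*(x+z) + r*c/N - c
  let PD := r*c/N*(N-1)*(x+z) - (1-p*q)*B*(N-1)*z - p*q*(N-1)*z*h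
  let PP := r*c/N*(N-1)*(x+z) + r*c/N - c - G + p*q*(N-1)*y*b
  x*((1-x)*(PC-PP) - y*(PD-PP))

/-- Right-hand side of ẏ in the reduced planar replicator system (z = 1-x-y). -/
noncomputable def gRHS (N r c G B b h p q : ℝ) (x y : ℝ) : ℝ :=
  let z := 1 - x - y
  let PC := r*c/N*(N-1)*(x+z) + r*c/N - c
  let PD := r*c/N*(N-1)*(x+z) - (1-p*q)*B*(N-1)*z - p*q*(N-1)*z*h
  let PP := r*c/N*(N-1)*(x+z) + r*c/N - c - G + p*q*(N-1)*y*b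
  y*((1-y)*(PD-PP) - x*(PC-PP))

/-- The reduced planar replicator vector field. -/
noncomputable def Fsys (N r c G B b h p q : ℝ) : ℝ × ℝ → ℝ × ℝ :=
  fun u => (fRHS N r c G B b h p q u.1 u.2, gRHS N r c G B b h p q u.1 u.2)

/-- Lyapunov stability of an equilibrium of a planar vector field. -/
def IsStableEq (F : ℝ × ℝ → ℝ × ℝ) (s : ℝ × ℝ) : Prop :=
  ∀ ε > 0, ∃ δ > 0, ∀ u : ℝ → ℝ × ℝ,
    (∀ t, HasDerivAt u (F (u t)) t) → ‖u 0 - s‖ < δ → ∀ t ≥ 0, ‖u t - s‖ < ε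

/-- Asymptotic stability of an equilibrium of a planar vector field. -/
def IsAsympStableEq (F : ℝ × ℝ → ℝ × ℝ) (s : ℝ × ℝ) : Prop :=
  IsStableEq F s ∧ ∃ δ > 0, ∀ u : ℝ → ℝ × ℝ,
    (∀ t, HasDerivAt u (F (u t)) t) → ‖u 0 - s‖ < δ →
      Filter.Tendsto u Filter.atTop (nhds s)

/-- (1,1)-entry of the Jacobian of the reduced system. -/
noncomputable def Jxx (N r c G B b h p q x0 y0 : ℝ) : ℝ :=
  deriv (fun s => fRHS N r c G B b h p q s y0) x0

/-- (1,2)-entry of the Jacobian of the reduced system. -/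
noncomputable def Jxy (N r c G B b h p q x0 y0 : ℝ) : ℝ :=
  deriv (fun s => fRHS N r c G B b h p q x0 s) y0

/-- (2,1)-entry of the Jacobian of the reduced system. -/
noncomputable def Jyx (N r c G B b h p q x0 y0 : ℝ) : ℝ :=
  deriv (fun s => gRHS N r c G B b h p q s y0) x0

/-- (2,2)-entry of the Jacobian of the reduced system. -/
noncomputable def Jyy (N r c G B b h p q x0 y0 : ℝ) : ℝ :=
  deriv (fun s => gRHS N r c G B b h p q x0 s) y0

/-!
At `(1, 0)` the Jacobian is read off from three one-variable restrictions: `gRHS (x, 0) ≡ 0`,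
`fRHS (x, 0) = G x (1 - x)`, and `gRHS (1, y) = y φ(y)` with `φ(0) = c - rc/N`.

For instability, the punisher-free edge `x + y = 1` is invariant, and on it the defector share
solves the logistic equation `y' = (c - rc/N) y (1 - y)`. Its explicit solution starts
arbitrarily close to `(1, 0)` but tends to the all-defector vertex `(0, 1)`.
-/
open Filter Topology Real

section Jacobian

variable {N r c G B b h p q : ℝ}

lemma deriv_id_mul_at_zero {φ : ℝ → ℝ} (hφ : DifferentiableAt ℝ φ 0) :
    deriv (fun s => s * φ s) 0 = φ 0 := by
  simpa using ((hasDerivAt_id' 0).fun_mul hφ.hasDerivAt).deriv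

lemma Jyx_one_zero : Jyx N r c G B b h p q 1 0 = 0 := by
  simp [Jyx, gRHS]

lemma Jxx_one_zero : Jxx N r c G B b h p q 1 0 = -G := by
  have hf : (fun s => fRHS N r c G B b h p q s 0) = fun s => G * (s * (1 - s)) := by
    funext s; simp only [fRHS]; ring
  have hd : HasDerivAt (fun s : ℝ => G * (s * (1 - s))) (G * (1 * (1 - 1) + 1 * (0 - 1))) 1 :=
    ((hasDerivAt_id 1).mul ((hasDerivAt_const 1 1).sub (hasDerivAt_id 1))).const_mul G
  rw [Jxx, hf, hd.deriv]; ring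

lemma Jyy_one_zero : Jyy N r c G B b h p q 1 0 = c - r*c/N := by
  simp only [Jyy, gRHS]
  rw [deriv_id_mul_at_zero (by fun_prop)]; ring

end Jacobian

noncomputable def logistic (k y₀ t : ℝ) : ℝ :=
  y₀ / (y₀ + (1 - y₀) * exp (-(k * t)))

section Logistic

variable {k y₀ : ℝ}

lemma logistic_zero : logistic k y₀ 0 = y₀ := by
  simp [logistic]

lemma hasDerivAt_logistic (h0 : 0 < y₀) (h1 : y₀ ≤ 1) (t : ℝ) :
    HasDerivAt (logistic k y₀) (k * logistic k y₀ t * (1 - logistic k y₀ t)) t := by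
  have hw : 0 < y₀ + (1 - y₀) * exp (-(k * t)) := by positivity
  have hexp : HasDerivAt (fun t => y₀ + (1 - y₀) * exp (-(k * t)))
      ((1 - y₀) * (exp (-(k * t)) * -(k * 1))) t :=
    ((((hasDerivAt_id' t).const_mul k).neg.exp).const_mul (1 - y₀)).const_add y₀
  refine ((hasDerivAt_const t y₀).fun_div hexp hw.ne').congr_deriv ?_
  simp only [logistic]
  field_simp
  ring

lemma tendsto_logistic (hk : 0 < k) (hy₀ : y₀ ≠ 0) :
    Tendsto (logistic k y₀) atTop (𝓝 1) := by
  have hexp : Tendsto (fun t => exp (-(k * t))) atTop (𝓝 0) :=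
    tendsto_exp_atBot.comp (tendsto_neg_atTop_atBot.comp (tendsto_id.const_mul_atTop hk))
  have hlim :=
    (tendsto_const_nhds (x := y₀)).div ((hexp.const_mul (1 - y₀)).const_add y₀) (by simpa)
  rw [mul_zero, add_zero, div_self hy₀] at hlim
  exact hlim

end Logistic

lemma norm_edge_sub_one_zero (y : ℝ) : ‖((1 - y, y) : ℝ × ℝ) - (1, 0)‖ = |y| := by
  simp [Prod.norm_def]

section Edge

variable {N r c G B b h p q : ℝ}

lemma Fsys_edge (y : ℝ) :
    Fsys N r c G B b h p q (1 - y, y) =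
      (-((c - r*c/N) * y * (1 - y)), (c - r*c/N) * y * (1 - y)) := by
  simp only [Fsys, fRHS, gRHS, Prod.mk.injEq]
  constructor <;> ring

lemma hasDerivAt_edge {y : ℝ → ℝ} {t : ℝ}
    (hy : HasDerivAt y ((c - r*c/N) * y t * (1 - y t)) t) :
    HasDerivAt (fun t => (1 - y t, y t)) (Fsys N r c G B b h p q (1 - y t, y t)) t := by
  rw [Fsys_edge]
  exact ((hasDerivAt_const t 1).fun_sub hy |>.congr_deriv (zero_sub _)).prodMk hy

theorem not_isStableEq_one_zero (hk : 0 < c - r*c/N) :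
    ¬ IsStableEq (Fsys N r c G B b h p q) (1, 0) := by
  intro hstable
  obtain ⟨δ, hδ, hclose⟩ := hstable (1/2) (by norm_num)
  set y₀ := min (δ/2) 1
  have hy₀ : 0 < y₀ := lt_min (half_pos hδ) one_pos
  set y := logistic (c - r*c/N) y₀
  have hsol : ∀ t, HasDerivAt (fun t => (1 - y t, y t))
      (Fsys N r c G B b h p q (1 - y t, y t)) t :=
    fun t => hasDerivAt_edge (hasDerivAt_logistic hy₀ (min_le_right _ _) t)
  have hstart : ‖((1 - y 0, y 0) : ℝ × ℝ) - (1, 0)‖ < δ := by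
    rw [norm_edge_sub_one_zero, show y 0 = y₀ from logistic_zero, abs_of_pos hy₀]
    exact (min_le_left _ _).trans_lt (half_lt_self hδ)
  obtain ⟨t, hyt, ht⟩ := ((tendsto_logistic hk hy₀.ne').eventually
    (eventually_gt_nhds (by norm_num : (1:ℝ)/2 < 1))).and (eventually_ge_atTop 0) |>.exists
  have := hclose _ hsol hstart t ht
  rw [norm_edge_sub_one_zero, abs_of_pos (by linarith)] at this
  linarith

end Edge

theorem stmt6_general (N r c G B b h p q : ℝ)
    (hr : 1 < r) (hrN : r < N) (hc : 0 < c) :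
    Jyx N r c G B b h p q 1 0 = 0 ∧
    Jxx N r c G B b h p q 1 0 = -G ∧
    Jyy N r c G B b h p q 1 0 = c - r*c/N ∧
    0 < c - r*c/N ∧
    ¬ IsStableEq (Fsys N r c G B b h p q) (1, 0) := by
  have hrN' : r / N < 1 := (div_lt_one (by linarith)).2 hrN
  have hk : 0 < c - r*c/N :=
    sub_pos.2 (by rw [mul_div_right_comm]; exact mul_lt_of_lt_one_left hc hrN')
  exact ⟨Jyx_one_zero, Jxx_one_zero, Jyy_one_zero, hk, not_isStableEq_one_zero hk⟩

/-- the Jacobian of the reduced planar replicator system at (1,0)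
(all-cooperator state) is upper triangular with eigenvalues -G and c - rc/N; since
r < N implies c - rc/N > 0, the all-cooperator state is a saddle point and unstable. -/
theorem stmt6 (N r c G B b h p q : ℝ)
    (hr : 1 < r) (hrN : r < N) (hc : 0 < c) (hG : 0 < G) (hB : 0 < B) (hb : 0 < b)
    (hh : 0 ≤ h) (hp0 : 0 ≤ p) (hp1 : p ≤ 1) (hq0 : 0 ≤ q) (hq1 : q ≤ 1) :
    Jyx N r c G B b h p q 1 0 = 0 ∧
    Jxx N r c G B b h p q 1 0 = -G ∧
    Jyy N r c G B b h p q 1 0 = c - r*c/N ∧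
    0 < c - r*c/N ∧
    ¬ IsStableEq (Fsys N r c G B b h p q) (1, 0) :=
  stmt6_general N r c G B b h p q hr hrN hc
end

section
/- With ε = x/(x+y) and z as coordinates, the replicator dynamics transform to ε̇ = ε(1-ε)[rc/N - c + (1-pq)B(N-1)z + (N-1)pqzh] and ż = z(1-z){(1-ε)[rc/N - c + pq(N-1)(1-z)b + (1-pq)B(N-1)z + pq(N-1)zh] - G}, wherever x + y > 0. -/
/-- Average payoff of the population. -/
noncomputable def PbarF (N r c G B b h p q x y z : ℝ) : ℝ :=
  x * PCf N r c x z + y * PDf N r c B h p q x z + z * PPf N r c G b p q x y z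

theorem deriv_share_of_replicator {𝕜 : Type*} [NontriviallyNormedField 𝕜] {x y : 𝕜 → 𝕜}
    {t a b m : 𝕜} (hx : DifferentiableAt 𝕜 x t) (hy : DifferentiableAt 𝕜 y t)
    (hxy : x t + y t ≠ 0) (hx' : deriv x t = x t * (a - m)) (hy' : deriv y t = y t * (b - m)) :
    deriv (fun s => x s / (x s + y s)) t
      = x t / (x t + y t) * (1 - x t / (x t + y t)) * (a - b) := by
  rw [deriv_fun_div hx (hx.fun_add hy) hxy, deriv_fun_add hx hy, hx', hy']
  field_simp
  ring

theorem PCf_sub_PDf (N r c B h p q x z : ℝ) :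
    PCf N r c x z - PDf N r c B h p q x z
      = r*c/N - c + (1-p*q)*B*(N-1)*z + (N-1)*p*q*z*h := by
  simp only [PCf, PDf]
  ring

theorem PPf_sub_PbarF {N r c G B b h p q x y z : ℝ} (hsum : x + y + z = 1)
    (hxy : x + y ≠ 0) :
    PPf N r c G b p q x y z - PbarF N r c G B b h p q x y z
      = (1 - z) * ((1 - x / (x + y))
          * (r*c/N - c + p*q*(N-1)*(1 - z)*b + (1-p*q)*B*(N-1)*z + p*q*(N-1)*z*h) - G) := by
  obtain rfl : z = 1 - (x + y) := by linarith
  simp only [PPf, PbarF, PCf, PDf]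
  field_simp
  ring

theorem stmt10_general (N r c G B b h p q : ℝ)
    (x y z : ℝ → ℝ)
    (hx : Differentiable ℝ x) (hy : Differentiable ℝ y)
    (hsum : ∀ t, x t + y t + z t = 1)
    (hrepx : ∀ t, deriv x t
      = x t * (PCf N r c (x t) (z t) - PbarF N r c G B b h p q (x t) (y t) (z t)))
    (hrepy : ∀ t, deriv y t
      = y t * (PDf N r c B h p q (x t) (z t) - PbarF N r c G B b h p q (x t) (y t) (z t)))
    (hrepz : ∀ t, deriv z t
      = z t * (PPf N r c G b p q (x t) (y t) (z t)
          - PbarF N r c G B b h p q (x t) (y t) (z t)))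
    (t : ℝ) (hpos : 0 < x t + y t) :
    deriv (fun s => x s / (x s + y s)) t
      = (x t / (x t + y t)) * (1 - x t / (x t + y t))
          * (r*c/N - c + (1-p*q)*B*(N-1)*(z t) + (N-1)*p*q*(z t)*h) ∧
    deriv z t
      = z t * (1 - z t)
          * ((1 - x t / (x t + y t))
              * (r*c/N - c + p*q*(N-1)*(1 - z t)*b + (1-p*q)*B*(N-1)*(z t)
                  + p*q*(N-1)*(z t)*h) - G) := by
  constructor
  · rw [deriv_share_of_replicator (hx t) (hy t) hpos.ne' (hrepx t) (hrepy t), PCf_sub_PDf]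
  · rw [hrepz t, PPf_sub_PbarF (hsum t) hpos.ne']
    ring

/-- with ε = x/(x+y) and z as coordinates, the replicator dynamics
transform to ε̇ = ε(1-ε)[rc/N - c + (1-pq)B(N-1)z + (N-1)pq z h] and
ż = z(1-z){(1-ε)[rc/N - c + pq(N-1)(1-z)b + (1-pq)B(N-1)z + pq(N-1)z h] - G},
wherever x + y > 0. -/
theorem stmt10 (N r c G B b h p q : ℝ)
    (hr : 1 < r) (hrN : r < N) (hc : 0 < c) (hG : 0 < G) (hB : 0 < B) (hb : 0 < b)
    (hh : 0 ≤ h) (hp0 : 0 < p) (hp1 : p ≤ 1) (hq0 : 0 < q) (hq1 : q ≤ 1)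
    (x y z : ℝ → ℝ)
    (hx : Differentiable ℝ x) (hy : Differentiable ℝ y) (hz : Differentiable ℝ z)
    (hsum : ∀ t, x t + y t + z t = 1)
    (hrepx : ∀ t, deriv x t
      = x t * (PCf N r c (x t) (z t) - PbarF N r c G B b h p q (x t) (y t) (z t)))
    (hrepy : ∀ t, deriv y t
      = y t * (PDf N r c B h p q (x t) (z t) - PbarF N r c G B b h p q (x t) (y t) (z t)))
    (hrepz : ∀ t, deriv z t
      = z t * (PPf N r c G b p q (x t) (y t) (z t)
          - PbarF N r c G B b h p q (x t) (y t) (z t)))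
    (t : ℝ) (hpos : 0 < x t + y t) :
    deriv (fun s => x s / (x s + y s)) t
      = (x t / (x t + y t)) * (1 - x t / (x t + y t))
          * (r*c/N - c + (1-p*q)*B*(N-1)*(z t) + (N-1)*p*q*(z t)*h) ∧
    deriv z t
      = z t * (1 - z t)
          * ((1 - x t / (x t + y t))
              * (r*c/N - c + p*q*(N-1)*(1 - z t)*b + (1-p*q)*B*(N-1)*(z t)
                  + p*q*(N-1)*(z t)*h) - G) :=
  stmt10_general N r c G B b h p q x y z hx hy hsum hrepx hrepy hrepz t hpos
end

section
/- If (1-pq)B + pqh - pqb = 0, then at any interior equilibrium of the reduced planar replicator system, the trace of the Jacobian is zero while the determinant is strictly positive; hence the eigenvalues are purely imaginary and the equilibrium is a linear center. -/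
/-!
Write `α = P_C - P_P` and `δ = P_D - P_P` (the payoff gaps, with `z = 1 - x - y` substituted),
so that `ẋ = x((1-x)α - yδ)` and `ẏ = y((1-y)δ - xα)`. At an interior rest point both gaps
vanish, since the linear system they satisfy has determinant `1 - x - y ≠ 0`. Hence only the
derivatives of the gaps enter the Jacobian, which is
`diag(x, y) · [[1-x, -y], [-x, 1-y]] · ∂(α, δ)/∂(x, y)`.
The gaps are affine, with `∂(α, δ)/∂(x, y) = (N-1) [[0, -pqb], [K, K - pqb]]` for
`K = (1-pq)B + pqh`; this gives the trace `(N-1)(K - pqb) y(1-x-y)` and the determinant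
`xy(1-x-y)(N-1)² pqb K`. When `K = pqb` the trace vanishes and the determinant is positive, so
every characteristic root satisfies `μ² = -det < 0` and is purely imaginary.
-/

lemma HasDerivAt.mul_mul_sub_mul_of_eq_zero {m k l a d : ℝ → ℝ} {m' k' l' a' d' t : ℝ}
    (hm : HasDerivAt m m' t) (hk : HasDerivAt k k' t) (hl : HasDerivAt l l' t)
    (ha : HasDerivAt a a' t) (hd : HasDerivAt d d' t) (ha0 : a t = 0) (hd0 : d t = 0) :
    HasDerivAt (fun s => m s * (k s * a s - l s * d s)) (m t * (k t * a' - l t * d')) t := by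
  refine (hm.mul ((hk.mul ha).sub (hl.mul hd))).congr_deriv ?_
  simp only [Pi.sub_apply, Pi.mul_apply, ha0, hd0]
  ring

lemma replicator_gaps_eq_zero {x y α δ : ℝ} (hx : 0 < x) (hy : 0 < y) (hxy : x + y < 1)
    (hf : x * ((1 - x) * α - y * δ) = 0) (hg : y * ((1 - y) * δ - x * α) = 0) :
    α = 0 ∧ δ = 0 := by
  have hf' := (mul_eq_zero.mp hf).resolve_left hx.ne'
  have hg' := (mul_eq_zero.mp hg).resolve_left hy.ne'
  have hz : 1 - x - y ≠ 0 := by linarith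
  have hα : α * (1 - x - y) = 0 := by linear_combination (1 - y) * hf' + y * hg'
  have hδ : δ * (1 - x - y) = 0 := by linear_combination x * hf' + (1 - x) * hg'
  exact ⟨(mul_eq_zero.mp hα).resolve_right hz, (mul_eq_zero.mp hδ).resolve_right hz⟩

lemma Complex.re_eq_zero_of_sq_add_ofReal_eq_zero {μ : ℂ} {D : ℝ} (hD : 0 < D)
    (h : μ ^ 2 + D = 0) : μ.re = 0 := by
  have hre := congrArg Complex.re h
  have him := congrArg Complex.im h
  simp only [sq, Complex.add_re, Complex.mul_re, Complex.ofReal_re, Complex.zero_re,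
    Complex.add_im, Complex.mul_im, Complex.ofReal_im, Complex.zero_im, add_zero] at hre him
  rcases mul_eq_zero.mp (by linarith : μ.re * μ.im = 0) with hr | hi
  · exact hr
  · nlinarith [sq_nonneg μ.re]

noncomputable def payoffGapCP (N G b p q y : ℝ) : ℝ := G - p*q*(N-1)*b*y

noncomputable def payoffGapDP (N r c G B b h p q x y : ℝ) : ℝ :=
  G + c - r*c/N - ((1-p*q)*B + p*q*h)*(N-1)*(1-x-y) - p*q*(N-1)*b*y

section
variable (N r c G B b h p q x y : ℝ)

lemma fRHS_eq : fRHS N r c G B b h p q x y =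
    x * ((1-x) * payoffGapCP N G b p q y - y * payoffGapDP N r c G B b h p q x y) := by
  simp only [fRHS, payoffGapCP, payoffGapDP]; ring

lemma gRHS_eq : gRHS N r c G B b h p q x y =
    y * ((1-y) * payoffGapDP N r c G B b h p q x y - x * payoffGapCP N G b p q y) := by
  simp only [gRHS, payoffGapCP, payoffGapDP]; ring

lemma hasDerivAt_payoffGapCP : HasDerivAt (payoffGapCP N G b p q) (-(p*q*(N-1)*b)) y := by
  unfold payoffGapCP
  simpa using ((hasDerivAt_id' y).const_mul (p*q*(N-1)*b)).const_sub G

lemma hasDerivAt_payoffGapDP_fst :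
    HasDerivAt (fun s => payoffGapDP N r c G B b h p q s y) (((1-p*q)*B + p*q*h)*(N-1)) x := by
  unfold payoffGapDP
  refine ((((hasDerivAt_id' x).const_sub (1:ℝ)).sub_const y).const_mul _ |>.const_sub _
    |>.sub_const _).congr_deriv ?_
  ring

lemma hasDerivAt_payoffGapDP_snd :
    HasDerivAt (fun t => payoffGapDP N r c G B b h p q x t)
      (((1-p*q)*B + p*q*h - p*q*b)*(N-1)) y := by
  unfold payoffGapDP
  refine ((((hasDerivAt_id' y).const_sub (1-x)).const_mul _ |>.const_sub _).sub
    ((hasDerivAt_id' y).const_mul _)).congr_deriv ?_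
  ring

lemma payoffGaps_eq_zero_of_interior (hx : 0 < x) (hy : 0 < y) (hxy : x + y < 1)
    (hf : fRHS N r c G B b h p q x y = 0) (hg : gRHS N r c G B b h p q x y = 0) :
    payoffGapCP N G b p q y = 0 ∧ payoffGapDP N r c G B b h p q x y = 0 :=
  replicator_gaps_eq_zero hx hy hxy (fRHS_eq N r c G B b h p q x y ▸ hf)
    (gRHS_eq N r c G B b h p q x y ▸ hg)

variable {N r c G B b h p q x y}
variable (hC : payoffGapCP N G b p q y = 0) (hD : payoffGapDP N r c G B b h p q x y = 0)
include hC hD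

lemma Jxx_eq_of_payoffGaps_eq_zero :
    Jxx N r c G B b h p q x y = x * ((1-x) * 0 - y * (((1-p*q)*B + p*q*h)*(N-1))) := by
  simp only [Jxx, fRHS_eq]
  exact ((hasDerivAt_id' x).mul_mul_sub_mul_of_eq_zero ((hasDerivAt_id' x).const_sub 1)
    (hasDerivAt_const x y) (hasDerivAt_const x _) (hasDerivAt_payoffGapDP_fst ..) hC hD).deriv

lemma Jxy_eq_of_payoffGaps_eq_zero :
    Jxy N r c G B b h p q x y = x * ((1-x) * -(p*q*(N-1)*b)
      - y * (((1-p*q)*B + p*q*h - p*q*b)*(N-1))) := by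
  simp only [Jxy, fRHS_eq]
  exact ((hasDerivAt_const y x).mul_mul_sub_mul_of_eq_zero (hasDerivAt_const y _)
    (hasDerivAt_id' y) (hasDerivAt_payoffGapCP ..) (hasDerivAt_payoffGapDP_snd ..) hC hD).deriv

lemma Jyx_eq_of_payoffGaps_eq_zero :
    Jyx N r c G B b h p q x y = y * ((1-y) * (((1-p*q)*B + p*q*h)*(N-1)) - x * 0) := by
  simp only [Jyx, gRHS_eq]
  exact ((hasDerivAt_const x y).mul_mul_sub_mul_of_eq_zero (hasDerivAt_const x _)
    (hasDerivAt_id' x) (hasDerivAt_payoffGapDP_fst ..) (hasDerivAt_const x _) hD hC).deriv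

lemma Jyy_eq_of_payoffGaps_eq_zero :
    Jyy N r c G B b h p q x y = y * ((1-y) * (((1-p*q)*B + p*q*h - p*q*b)*(N-1))
      - x * -(p*q*(N-1)*b)) := by
  simp only [Jyy, gRHS_eq]
  exact ((hasDerivAt_id' y).mul_mul_sub_mul_of_eq_zero ((hasDerivAt_id' y).const_sub 1)
    (hasDerivAt_const y x) (hasDerivAt_payoffGapDP_snd ..) (hasDerivAt_payoffGapCP ..) hD hC).deriv

lemma jacobian_trace_eq_of_payoffGaps_eq_zero :
    Jxx N r c G B b h p q x y + Jyy N r c G B b h p q x y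
      = (N-1) * ((1-p*q)*B + p*q*h - p*q*b) * (y * (1-y-x)) := by
  rw [Jxx_eq_of_payoffGaps_eq_zero hC hD, Jyy_eq_of_payoffGaps_eq_zero hC hD]
  ring

lemma jacobian_det_eq_of_payoffGaps_eq_zero :
    Jxx N r c G B b h p q x y * Jyy N r c G B b h p q x y
      - Jxy N r c G B b h p q x y * Jyx N r c G B b h p q x y
      = x * y * (1-x-y) * (N-1)^2 * (p*q*b) * (p*q*h + (1-p*q)*B) := by
  rw [Jxx_eq_of_payoffGaps_eq_zero hC hD, Jyy_eq_of_payoffGaps_eq_zero hC hD,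
    Jxy_eq_of_payoffGaps_eq_zero hC hD, Jyx_eq_of_payoffGaps_eq_zero hC hD]
  ring

end

theorem stmt11_general (N r c G B b h p q xs ys : ℝ)
    (hr : 1 < r) (hrN : r < N) (hb : 0 < b)
    (hp0 : 0 < p) (hq0 : 0 < q)
    (hdeg : (1-p*q)*B + p*q*h - p*q*b = 0)
    (hxs : 0 < xs) (hys : 0 < ys) (hsum : xs + ys < 1)
    (heq1 : fRHS N r c G B b h p q xs ys = 0)
    (heq2 : gRHS N r c G B b h p q xs ys = 0) :
    Jxx N r c G B b h p q xs ys + Jyy N r c G B b h p q xs ys = 0 ∧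
    0 < Jxx N r c G B b h p q xs ys * Jyy N r c G B b h p q xs ys
        - Jxy N r c G B b h p q xs ys * Jyx N r c G B b h p q xs ys ∧
    (∀ μ : ℂ,
      μ^2 - ((Jxx N r c G B b h p q xs ys + Jyy N r c G B b h p q xs ys : ℝ) : ℂ) * μ
        + ((Jxx N r c G B b h p q xs ys * Jyy N r c G B b h p q xs ys
            - Jxy N r c G B b h p q xs ys * Jyx N r c G B b h p q xs ys : ℝ) : ℂ) = 0 →
      μ.re = 0) := by
  obtain ⟨hC, hD⟩ :=
    payoffGaps_eq_zero_of_interior N r c G B b h p q xs ys hxs hys hsum heq1 heq2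
  have htrace : Jxx N r c G B b h p q xs ys + Jyy N r c G B b h p q xs ys = 0 := by
    rw [jacobian_trace_eq_of_payoffGaps_eq_zero hC hD, hdeg, mul_zero, zero_mul]
  have hdet : 0 < Jxx N r c G B b h p q xs ys * Jyy N r c G B b h p q xs ys
      - Jxy N r c G B b h p q xs ys * Jyx N r c G B b h p q xs ys := by
    rw [jacobian_det_eq_of_payoffGaps_eq_zero hC hD, show p*q*h + (1-p*q)*B = p*q*b by linarith]
    have : 0 < N - 1 := by linarith
    have : 0 < 1 - xs - ys := by linarith
    positivity
  refine ⟨htrace, hdet, fun μ hμ => Complex.re_eq_zero_of_sq_add_ofReal_eq_zero hdet ?_⟩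
  rw [htrace] at hμ
  simpa using hμ

/-- if (1-pq)B + pqh - pqb = 0, then at any interior equilibrium of the
reduced planar replicator system the trace of the Jacobian is zero while the determinant
is strictly positive; hence the eigenvalues are purely imaginary (linear center). -/
theorem stmt11 (N r c G B b h p q xs ys : ℝ)
    (hr : 1 < r) (hrN : r < N) (hc : 0 < c) (hG : 0 < G) (hB : 0 < B) (hb : 0 < b)
    (hh : 0 ≤ h) (hp0 : 0 < p) (hp1 : p ≤ 1) (hq0 : 0 < q) (hq1 : q ≤ 1)
    (hdeg : (1-p*q)*B + p*q*h - p*q*b = 0)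
    (hxs : 0 < xs) (hys : 0 < ys) (hsum : xs + ys < 1)
    (heq1 : fRHS N r c G B b h p q xs ys = 0)
    (heq2 : gRHS N r c G B b h p q xs ys = 0) :
    Jxx N r c G B b h p q xs ys + Jyy N r c G B b h p q xs ys = 0 ∧
    0 < Jxx N r c G B b h p q xs ys * Jyy N r c G B b h p q xs ys
        - Jxy N r c G B b h p q xs ys * Jyx N r c G B b h p q xs ys ∧
    (∀ μ : ℂ,
      μ^2 - ((Jxx N r c G B b h p q xs ys + Jyy N r c G B b h p q xs ys : ℝ) : ℂ) * μ
        + ((Jxx N r c G B b h p q xs ys * Jyy N r c G B b h p q xs ys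
            - Jxy N r c G B b h p q xs ys * Jyx N r c G B b h p q xs ys : ℝ) : ℂ) = 0 →
      μ.re = 0) :=
  stmt11_general N r c G B b h p q xs ys hr hrN hb hp0 hq0 hdeg hxs hys hsum heq1 heq2
end

section
/- Suppose rc/N - c - G > max{-(N-1)[(1-pq)B + pqh], -pq(N-1)b} and r < N. Define λ_P = ((N-1)[(1-pq)B + pqh] + (rc/N - c - G))/G, λ_C = G/(c - rc/N), λ_D = (c - rc/N)/(rc/N - c - G + pq(N-1)b). Then the product λ = λ_P·λ_C·λ_D equals (rc/N - c - G + (N-1)[(1-pq)B + pqh])/(rc/N - c - G + pq(N-1)b), and if additionally (1-pq)B + pq(h-b) > 0 then λ > 1. -/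
/-!
The three ratios telescope, since `G` and `c - rc/N` each occur once as a numerator and once as a
denominator. The numerator of the product exceeds its (positive) denominator by
`(N-1)[(1-pq)B + pq(h-b)]`, whence `λ > 1`.
-/

lemma sub_mul_div_pos_of_lt {K : Type*} [Field K] [LinearOrder K] [IsStrictOrderedRing K]
    {c r N : K} (hc : 0 < c) (hN : 0 < N) (hrN : r < N) : 0 < c - r * c / N := by
  have hrc : r * c / N < c := by
    rw [div_lt_iff₀ hN]
    nlinarith
  linarith

theorem stmt12_general (N r c G B b h p q lP lC lD : ℝ)
    (hr : 1 < r) (hrN : r < N) (hc : 0 < c) (hG : 0 < G)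
    (hcond : r*c/N - c - G >
      max (-((N-1)*((1-p*q)*B + p*q*h))) (-(p*q*(N-1)*b)))
    (hlP : lP = ((N-1)*((1-p*q)*B + p*q*h) + (r*c/N - c - G)) / G)
    (hlC : lC = G / (c - r*c/N))
    (hlD : lD = (c - r*c/N) / (r*c/N - c - G + p*q*(N-1)*b)) :
    lP * lC * lD
      = (r*c/N - c - G + (N-1)*((1-p*q)*B + p*q*h))
          / (r*c/N - c - G + p*q*(N-1)*b) ∧
    ((1-p*q)*B + p*q*(h - b) > 0 → 1 < lP * lC * lD) := by
  have hden : 0 < r*c/N - c - G + p*q*(N-1)*b := by linarith [(max_lt_iff.1 hcond).2]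
  have hprod : lP * lC * lD
      = (r*c/N - c - G + (N-1)*((1-p*q)*B + p*q*h)) / (r*c/N - c - G + p*q*(N-1)*b) := by
    rw [hlP, hlC, hlD, div_mul_div_cancel₀ hG.ne',
      div_mul_div_cancel₀ (sub_mul_div_pos_of_lt hc (by linarith) hrN).ne', add_comm]
  refine ⟨hprod, fun hgap => ?_⟩
  rw [hprod, one_lt_div hden]
  have hexcess : 0 < (N-1) * ((1-p*q)*B + p*q*(h-b)) := mul_pos (by linarith) hgap
  linear_combination hexcess

/-- with λ_P = ((N-1)[(1-pq)B + pqh] + (rc/N - c - G))/G,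
λ_C = G/(c - rc/N), λ_D = (c - rc/N)/(rc/N - c - G + pq(N-1)b), under
rc/N - c - G > max{-(N-1)[(1-pq)B + pqh], -pq(N-1)b} and r < N, the product
λ = λ_P λ_C λ_D equals (rc/N - c - G + (N-1)[(1-pq)B + pqh])/(rc/N - c - G + pq(N-1)b),
and if moreover (1-pq)B + pq(h-b) > 0 then λ > 1. -/
theorem stmt12 (N r c G B b h p q lP lC lD : ℝ)
    (hr : 1 < r) (hrN : r < N) (hc : 0 < c) (hG : 0 < G) (hB : 0 < B) (hb : 0 < b)
    (hh : 0 ≤ h) (hp0 : 0 < p) (hp1 : p ≤ 1) (hq0 : 0 < q) (hq1 : q ≤ 1)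
    (hcond : r*c/N - c - G >
      max (-((N-1)*((1-p*q)*B + p*q*h))) (-(p*q*(N-1)*b)))
    (hlP : lP = ((N-1)*((1-p*q)*B + p*q*h) + (r*c/N - c - G)) / G)
    (hlC : lC = G / (c - r*c/N))
    (hlD : lD = (c - r*c/N) / (r*c/N - c - G + p*q*(N-1)*b)) :
    lP * lC * lD
      = (r*c/N - c - G + (N-1)*((1-p*q)*B + p*q*h))
          / (r*c/N - c - G + p*q*(N-1)*b) ∧
    ((1-p*q)*B + p*q*(h - b) > 0 → 1 < lP * lC * lD) :=
  stmt12_general N r c G B b h p q lP lC lD hr hrN hc hG hcond hlP hlC hlD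
end
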